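/- Let Γ be an infinite closed subgroup of the torus T^2 = (ℝ/ℤ)^2 (equivalently, a closed subgroup of dimension at least one). Then for every r ≥ 1, Γ satisfies Condition A for r if and only if Γ ∩ Π_r ≠ ∅. -/
import Mathlib


noncomputable section

/-- The `n`-dimensional torus `(ℝ/ℤ)^n`. -/
abbrev Torus (n : ℕ) := Fin n → AddCircle (1 : ℝ)

/-- The quotient homomorphism `q : ℝ^n → T^n`. -/
def qmap (n : ℕ) (v : Fin n → ℝ) : Torus n := fun j => (v j : AddCircle (1 : ℝ))

/-- Condition A for `r`: there are `r` points of `Γ` with lifts `λ i j ∈ (0,1)`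
whose coordinatewise sums are all `< 1`. -/
def CondA (n r : ℕ) (Γ : Set (Torus n)) : Prop :=
  ∃ lam : Fin r → Fin n → ℝ,
    (∀ i j, 0 < lam i j ∧ lam i j < 1) ∧
    (∀ i, qmap n (lam i) ∈ Γ) ∧
    (∀ j, (∑ i, lam i j) < 1)

/-- `Π_r`, the image under `q` of the open cube `(0, 1/r)^n`. -/
def PiCube (n r : ℕ) : Set (Torus n) :=
  qmap n '' {v | ∀ j, 0 < v j ∧ v j < 1 / (r : ℝ)}

namespace CondAProof

/-- `qmap` as an additive monoid hom. -/
def qmapHom (n : ℕ) : (Fin n → ℝ) →+ Torus n :=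
  AddMonoidHom.mk' (qmap n) (fun v w => by funext j; simp [qmap])

lemma qmapHom_apply (n : ℕ) (v : Fin n → ℝ) : qmapHom n v = qmap n v := rfl

lemma qmap_add (n : ℕ) (v w : Fin n → ℝ) :
    qmap n (v + w) = qmap n v + qmap n w := by
  rw [← qmapHom_apply, ← qmapHom_apply, ← qmapHom_apply, map_add]

lemma qmap_zsmul (n : ℕ) (m : ℤ) (v : Fin n → ℝ) :
    qmap n (m • v) = m • qmap n v := by
  rw [← qmapHom_apply, ← qmapHom_apply, map_zsmul]

lemma qmap_sum (n : ℕ) {ι : Type*} (s : Finset ι) (f : ι → Fin n → ℝ) :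
    qmap n (∑ i ∈ s, f i) = ∑ i ∈ s, qmap n (f i) := by
  rw [← qmapHom_apply, map_sum]; rfl

lemma qmap_continuous (n : ℕ) : Continuous (qmap n) := by
  apply continuous_pi; intro j
  exact (AddCircle.continuous_mk' 1).comp (continuous_apply j)

/-- From an infinite closed subgroup of the torus, extract a one-parameter line. -/
lemma exists_line (Γ : AddSubgroup (Torus 2)) (hclosed : IsClosed (Γ : Set (Torus 2)))
    (hinf : (Γ : Set (Torus 2)).Infinite) :
    ∃ u : Fin 2 → ℝ, u ≠ 0 ∧ ∀ t : ℝ, qmap 2 (t • u) ∈ Γ := by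
  classical
  haveI : Fact ((0:ℝ) < 1) := ⟨one_pos⟩
  set G : Set (Fin 2 → ℝ) := qmap 2 ⁻¹' (Γ : Set (Torus 2)) with hGdef
  have hGclosed : IsClosed G := hclosed.preimage (qmap_continuous 2)
  have hGsub : ∀ v ∈ G, ∀ w ∈ G, v - w ∈ G := by
    intro v hv w hw
    have : qmap 2 (v - w) = qmap 2 v - qmap 2 w := by
      rw [← qmapHom_apply, ← qmapHom_apply, ← qmapHom_apply, map_sub]
    simp only [hGdef, Set.mem_preimage] at hv hw ⊢
    rw [this]; exact sub_mem hv hw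
  have hGzsmul : ∀ (m : ℤ), ∀ v ∈ G, m • v ∈ G := by
    intro m v hv
    simp only [hGdef, Set.mem_preimage] at hv ⊢
    rw [qmap_zsmul]; exact zsmul_mem hv m
  -- lift points of Γ into [0,1]^2
  set L : Torus 2 → (Fin 2 → ℝ) := fun θ j => (AddCircle.equivIco 1 0 (θ j) : ℝ) with hLdef
  have hLq : ∀ θ, qmap 2 (L θ) = θ := by
    intro θ; funext j
    exact (AddCircle.equivIco 1 0).symm_apply_apply (θ j)
  have hLinj : Function.Injective L := by
    intro θ θ' h
    have := congrArg (qmap 2) h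
    rwa [hLq, hLq] at this
  have hLmem : ∀ θ ∈ (Γ : Set (Torus 2)), L θ ∈ G := by
    intro θ hθ
    simp only [hGdef, Set.mem_preimage, hLq]
    exact hθ
  have hLrange : ∀ θ, L θ ∈ Set.Icc (0 : Fin 2 → ℝ) 1 := by
    intro θ
    constructor <;> (intro j)
    · exact (AddCircle.equivIco 1 0 (θ j)).2.1
    · have := (AddCircle.equivIco 1 0 (θ j)).2.2
      simp only [zero_add] at this
      exact le_of_lt this
  obtain ⟨e⟩ : Nonempty (ℕ ↪ (Γ : Set (Torus 2))) := ⟨hinf.natEmbedding⟩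
  set T : ℕ → (Fin 2 → ℝ) := fun k => L (e k) with hTdef
  have hTinj : Function.Injective T := by
    intro k l h
    have := hLinj h
    exact e.injective (Subtype.ext this)
  have hTG : ∀ k, T k ∈ G := fun k => hLmem _ (e k).2
  obtain ⟨x, -, φ, hφ, hTφ⟩ :=
    (isCompact_Icc (a := (0 : Fin 2 → ℝ)) (b := 1)).tendsto_subseq (fun k => hLrange (e k))
  set d : ℕ → (Fin 2 → ℝ) := fun k => T (φ (k + 1)) - T (φ k) with hddef
  have hd0 : ∀ k, d k ≠ 0 := by
    intro k h
    have : T (φ (k + 1)) = T (φ k) := by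
      have := sub_eq_zero.mp h
      exact this
    exact absurd (hTinj this) (Nat.ne_of_gt (hφ (Nat.lt_succ_self k)))
  have hdG : ∀ k, d k ∈ G := fun k => hGsub _ (hTG _) _ (hTG _)
  have hdlim : Filter.Tendsto d Filter.atTop (nhds 0) := by
    have h1 : Filter.Tendsto (fun k => T (φ (k + 1))) Filter.atTop (nhds x) :=
      hTφ.comp (Filter.tendsto_add_atTop_nat 1)
    simpa using h1.sub hTφ
  set ε : ℕ → ℝ := fun k => ‖d k‖ with hεdef
  have hεpos : ∀ k, 0 < ε k := fun k => norm_pos_iff.mpr (hd0 k)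
  have hεlim : Filter.Tendsto ε Filter.atTop (nhds 0) := by
    simpa using hdlim.norm
  set w : ℕ → (Fin 2 → ℝ) := fun k => (ε k)⁻¹ • d k with hwdef
  have hwsphere : ∀ k, w k ∈ Metric.sphere (0 : Fin 2 → ℝ) 1 := by
    intro k
    simp only [mem_sphere_iff_norm, sub_zero, hwdef, norm_smul, norm_inv, Real.norm_eq_abs,
      abs_of_pos (hεpos k)]
    exact inv_mul_cancel₀ (ne_of_gt (hεpos k))
  obtain ⟨u, husphere, ψ, hψ, huφ⟩ :=
    (isCompact_sphere (0 : Fin 2 → ℝ) 1).tendsto_subseq hwsphere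
  have hu0 : u ≠ 0 := by
    intro h
    rw [h] at husphere
    simp at husphere
  refine ⟨u, hu0, ?_⟩
  intro t
  have key : t • u ∈ G := by
    have hεψ : Filter.Tendsto (fun k => ε (ψ k)) Filter.atTop (nhds 0) :=
      hεlim.comp hψ.tendsto_atTop
    set m : ℕ → ℤ := fun k => ⌊t / ε (ψ k)⌋ with hmdef
    set z : ℕ → (Fin 2 → ℝ) := fun k => (m k) • d (ψ k) with hzdef
    have hzG : ∀ k, z k ∈ G := fun k => hGzsmul _ _ (hdG _)
    have hzeq : ∀ k, z k = (((m k : ℝ)) * ε (ψ k)) • w (ψ k) := by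
      intro k
      have hd : d (ψ k) = ε (ψ k) • w (ψ k) := by
        rw [hwdef]
        rw [smul_inv_smul₀ (ne_of_gt (hεpos (ψ k)))]
      show m k • d (ψ k) = _
      rw [← Int.cast_smul_eq_zsmul ℝ (m k) (d (ψ k)), hd, smul_smul]
    have hscal : Filter.Tendsto (fun k => (m k : ℝ) * ε (ψ k)) Filter.atTop (nhds t) := by
      have hbound : ∀ k, ‖(m k : ℝ) * ε (ψ k) - t‖ ≤ ε (ψ k) := by
        intro k
        have hp := hεpos (ψ k)
        have h1 : (m k : ℝ) ≤ t / ε (ψ k) := Int.floor_le _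
        have h2 : t / ε (ψ k) - 1 < (m k : ℝ) := Int.sub_one_lt_floor _
        have h3 : (m k : ℝ) * ε (ψ k) ≤ t := by
          have := mul_le_mul_of_nonneg_right h1 (le_of_lt hp)
          rwa [div_mul_cancel₀ t (ne_of_gt hp)] at this
        have h4 : t - ε (ψ k) < (m k : ℝ) * ε (ψ k) := by
          have := mul_lt_mul_of_pos_right h2 hp
          rwa [sub_mul, div_mul_cancel₀ t (ne_of_gt hp), one_mul] at this
        rw [Real.norm_eq_abs, abs_le]
        constructor <;> linarith
      have : Filter.Tendsto (fun k => (m k : ℝ) * ε (ψ k) - t) Filter.atTop (nhds 0) :=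
        squeeze_zero_norm hbound hεψ
      simpa using this.add_const t
    have hzlim : Filter.Tendsto z Filter.atTop (nhds (t • u)) := by
      have h := hscal.smul huφ
      refine h.congr fun k => ?_
      rw [Function.comp_apply, ← hzeq k]
    exact hGclosed.mem_of_tendsto hzlim (Filter.Eventually.of_forall hzG)
  exact key


lemma mem_piCube (r : ℕ) (v : Fin 2 → ℝ) (h : ∀ j, 0 < v j ∧ v j < 1 / (r : ℝ)) :
    qmap 2 v ∈ PiCube 2 r := ⟨v, h, rfl⟩

lemma case_pos_pos {Γ : AddSubgroup (Torus 2)} {r : ℕ} (hr : 1 ≤ r) {u : Fin 2 → ℝ}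
    (ha : 0 < u 0) (hb : 0 < u 1) (hu : ∀ t : ℝ, qmap 2 (t • u) ∈ Γ) :
    ((Γ : Set (Torus 2)) ∩ PiCube 2 r).Nonempty := by
  have hrR : (1:ℝ) ≤ r := by exact_mod_cast hr
  have hr0 : (0:ℝ) < r := by linarith
  set t := min (1/(2*r*u 0)) (1/(2*r*u 1)) with ht
  have ht0 : 0 < t := lt_min (by positivity) (by positivity)
  have h2r : 1/(2*(r:ℝ)) < 1/r := by
    apply one_div_lt_one_div_of_lt hr0; linarith
  have hbound : ∀ j : Fin 2, 0 < u j → t ≤ 1/(2*r*u j) → 0 < t * u j ∧ t * u j < 1/(r:ℝ) := by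
    intro j hj hle
    refine ⟨mul_pos ht0 hj, ?_⟩
    have h1 : t * u j ≤ (1/(2*r*u j)) * u j := mul_le_mul_of_nonneg_right hle hj.le
    have h2 : (1/(2*(r:ℝ)*u j)) * u j = 1/(2*r) := by
      field_simp
    rw [h2] at h1
    linarith
  refine ⟨qmap 2 (t • u), hu t, mem_piCube r _ ?_⟩
  refine Fin.forall_fin_two.mpr ⟨?_, ?_⟩
  · exact hbound 0 ha (min_le_left _ _)
  · exact hbound 1 hb (min_le_right _ _)

lemma case_axis0 {Γ : AddSubgroup (Torus 2)} {r : ℕ} (hr : 1 ≤ r) {u : Fin 2 → ℝ}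
    (ha : u 0 ≠ 0) (hb : u 1 = 0) (hu : ∀ t : ℝ, qmap 2 (t • u) ∈ Γ)
    (hA : CondA 2 r (Γ : Set (Torus 2))) :
    ((Γ : Set (Torus 2)) ∩ PiCube 2 r).Nonempty := by
  obtain ⟨lam, hbd, hmem, hsum⟩ := hA
  have hrR : (1:ℝ) ≤ r := by exact_mod_cast hr
  have hr0 : (0:ℝ) < r := by linarith
  have hex : ∃ i : Fin r, lam i 1 < 1/(r:ℝ) := by
    by_contra h
    push_neg at h
    have h2 : ∑ _i : Fin r, (1/(r:ℝ)) ≤ ∑ i : Fin r, lam i 1 :=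
      Finset.sum_le_sum (fun i _ => h i)
    rw [Finset.sum_const, Finset.card_univ, Fintype.card_fin, nsmul_eq_mul] at h2
    have h3 : (r:ℝ) * (1/r) = 1 := by field_simp
    rw [h3] at h2
    linarith [hsum 1]
  obtain ⟨i, hi⟩ := hex
  set t := (1/(2*(r:ℝ)) - lam i 0) / u 0 with htdef
  refine ⟨qmap 2 (lam i) + qmap 2 (t • u), Γ.add_mem (hmem i) (hu t), ?_⟩
  rw [← qmap_add]
  apply mem_piCube
  have h2r : 1/(2*(r:ℝ)) < 1/r := by
    apply one_div_lt_one_div_of_lt hr0; linarith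
  have e0 : (lam i + t • u) 0 = 1/(2*(r:ℝ)) := by
    show lam i 0 + t * u 0 = _
    rw [htdef, div_mul_cancel₀ _ ha]
    ring
  have e1 : (lam i + t • u) 1 = lam i 1 := by
    show lam i 1 + t * u 1 = _
    rw [hb]; ring
  refine Fin.forall_fin_two.mpr ⟨?_, ?_⟩
  · rw [e0]; exact ⟨by positivity, h2r⟩
  · rw [e1]; exact ⟨(hbd i 1).1, hi⟩

lemma case_axis1 {Γ : AddSubgroup (Torus 2)} {r : ℕ} (hr : 1 ≤ r) {u : Fin 2 → ℝ}
    (ha : u 0 = 0) (hb : u 1 ≠ 0) (hu : ∀ t : ℝ, qmap 2 (t • u) ∈ Γ)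
    (hA : CondA 2 r (Γ : Set (Torus 2))) :
    ((Γ : Set (Torus 2)) ∩ PiCube 2 r).Nonempty := by
  obtain ⟨lam, hbd, hmem, hsum⟩ := hA
  have hrR : (1:ℝ) ≤ r := by exact_mod_cast hr
  have hr0 : (0:ℝ) < r := by linarith
  have hex : ∃ i : Fin r, lam i 0 < 1/(r:ℝ) := by
    by_contra h
    push_neg at h
    have h2 : ∑ _i : Fin r, (1/(r:ℝ)) ≤ ∑ i : Fin r, lam i 0 :=
      Finset.sum_le_sum (fun i _ => h i)
    rw [Finset.sum_const, Finset.card_univ, Fintype.card_fin, nsmul_eq_mul] at h2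
    have h3 : (r:ℝ) * (1/r) = 1 := by field_simp
    rw [h3] at h2
    linarith [hsum 0]
  obtain ⟨i, hi⟩ := hex
  set t := (1/(2*(r:ℝ)) - lam i 1) / u 1 with htdef
  refine ⟨qmap 2 (lam i) + qmap 2 (t • u), Γ.add_mem (hmem i) (hu t), ?_⟩
  rw [← qmap_add]
  apply mem_piCube
  have h2r : 1/(2*(r:ℝ)) < 1/r := by
    apply one_div_lt_one_div_of_lt hr0; linarith
  have e0 : (lam i + t • u) 0 = lam i 0 := by
    show lam i 0 + t * u 0 = _
    rw [ha]; ring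
  have e1 : (lam i + t • u) 1 = 1/(2*(r:ℝ)) := by
    show lam i 1 + t * u 1 = _
    rw [htdef, div_mul_cancel₀ _ hb]
    ring
  refine Fin.forall_fin_two.mpr ⟨?_, ?_⟩
  · rw [e0]; exact ⟨(hbd i 0).1, hi⟩
  · rw [e1]; exact ⟨by positivity, h2r⟩

lemma case_mixed {Γ : AddSubgroup (Torus 2)} {r : ℕ} (hr : 1 ≤ r) {u : Fin 2 → ℝ}
    (ha : 0 < u 0) (hb : u 1 < 0) (hu : ∀ t : ℝ, qmap 2 (t • u) ∈ Γ)
    (hA : CondA 2 r (Γ : Set (Torus 2))) :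
    ((Γ : Set (Torus 2)) ∩ PiCube 2 r).Nonempty := by
  classical
  obtain ⟨lam, hbd, hmem, hsum⟩ := hA
  have hrR : (1:ℝ) ≤ r := by exact_mod_cast hr
  have hr0 : (0:ℝ) < r := by linarith
  have ha' : u 0 ≠ 0 := ne_of_gt ha
  set c : ℝ := -u 1 / u 0 with hc
  have hc0 : 0 < c := div_pos (neg_pos.mpr hb) ha
  set lam' : ℕ → Fin 2 → ℝ := fun i => if h : i < r then lam ⟨i, h⟩ else 0 with hlam'
  have hlam'nonneg : ∀ i j, 0 ≤ lam' i j := by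
    intro i j
    by_cases h : i < r
    · simp only [hlam', dif_pos h]; exact (hbd ⟨i, h⟩ j).1.le
    · simp [hlam', dif_neg h]
  have hlam'pos : ∀ i, i < r → ∀ j, 0 < lam' i j := by
    intro i h j
    simp only [hlam', dif_pos h]; exact (hbd ⟨i, h⟩ j).1
  set F : ℕ → ℝ := fun i => c * lam' i 0 + lam' i 1 with hF
  set S : ℕ → ℝ := fun k => ∑ i ∈ Finset.range k, F i with hS
  have hFnonneg : ∀ i, 0 ≤ F i := by
    intro i
    have h0 := hlam'nonneg i 0
    have h1 := hlam'nonneg i 1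
    have : 0 ≤ c * lam' i 0 := mul_nonneg hc0.le h0
    simp only [hF]; linarith
  have hsum' : ∀ j, ∑ i ∈ Finset.range r, lam' i j = ∑ i : Fin r, lam i j := by
    intro j
    rw [← Fin.sum_univ_eq_sum_range (fun i => lam' i j) r]
    exact Finset.sum_congr rfl fun i _ => by simp [hlam', i.isLt]
  have hSmono : ∀ {k l : ℕ}, k ≤ l → S k ≤ S l := by
    intro k l h
    apply Finset.sum_le_sum_of_subset_of_nonneg (Finset.range_subset_range.mpr h)
    intro i _ _
    exact hFnonneg i
  have hS0 : ∀ k, 0 ≤ S k := fun k => Finset.sum_nonneg fun i _ => hFnonneg i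
  have hSr : S r < c + 1 := by
    have e0 := hsum' 0
    have e1 := hsum' 1
    have hSeq : S r = c * (∑ i ∈ Finset.range r, lam' i 0) + ∑ i ∈ Finset.range r, lam' i 1 := by
      simp only [hS, hF, Finset.sum_add_distrib, Finset.mul_sum]
    rw [hSeq, e0, e1]
    have hs0 := hsum 0
    have hs1 := hsum 1
    nlinarith [Finset.sum_nonneg (fun (i : Fin r) (_ : i ∈ Finset.univ) => (hbd i 0).1.le)]
  have hcp : (0:ℝ) < c + 1 := by linarith
  have hpig : ∃ k l : ℕ, k < l ∧ l ≤ r ∧ S l - S k < (c + 1) / r := by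
    have key : ∀ k l : ℕ, k < l → l ≤ r →
        ⌊S k * r / (c+1)⌋ = ⌊S l * r / (c+1)⌋ → S l - S k < (c+1)/r := by
      intro k l hkl hlr hfe
      have hx := Int.floor_le (S k * r / (c+1))
      have hy := Int.lt_floor_add_one (S l * r / (c+1))
      rw [← hfe] at hy
      have h3 : S l * r / (c+1) < S k * r / (c+1) + 1 := by linarith
      have h4 : S l * r < S k * r + (c+1) := by
        have h5 := mul_lt_mul_of_pos_right h3 hcp
        rw [add_mul, div_mul_cancel₀ _ (ne_of_gt hcp), div_mul_cancel₀ _ (ne_of_gt hcp),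
          one_mul] at h5
        exact h5
      rw [lt_div_iff₀ hr0]
      nlinarith
    have hmaps : ∀ k ∈ Finset.range (r+1), ⌊S k * r / (c+1)⌋ ∈ Finset.Ico (0:ℤ) (r:ℤ) := by
      intro k hk
      rw [Finset.mem_range, Nat.lt_succ_iff] at hk
      rw [Finset.mem_Ico]
      have h1 : 0 ≤ S k * r / (c+1) := div_nonneg (mul_nonneg (hS0 k) hr0.le) hcp.le
      have h2 : S k * r / (c+1) < r := by
        rw [div_lt_iff₀ hcp]
        nlinarith [hSmono hk, hSr]
      exact ⟨Int.floor_nonneg.mpr h1, Int.floor_lt.mpr (by exact_mod_cast h2)⟩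
    have hcard : (Finset.Ico (0:ℤ) (r:ℤ)).card < (Finset.range (r+1)).card := by
      rw [Finset.card_range, Int.card_Ico]
      simp
    obtain ⟨k, hk, l, hl, hne, hfe⟩ :=
      Finset.exists_ne_map_eq_of_card_lt_of_maps_to hcard hmaps
    rw [Finset.mem_range, Nat.lt_succ_iff] at hk hl
    rcases hne.lt_or_gt with h | h
    · exact ⟨k, l, h, hl, key k l h hl hfe⟩
    · exact ⟨l, k, h, hk, key l k h hk hfe.symm⟩
  obtain ⟨k, l, hkl, hlr, hdiff⟩ := hpig
  have hkr : k < r := lt_of_lt_of_le hkl hlr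
  set μ : Fin 2 → ℝ := fun j => ∑ i ∈ Finset.Ico k l, lam' i j with hμ
  have hμpos : ∀ j, 0 < μ j := by
    intro j
    apply Finset.sum_pos' (fun i _ => hlam'nonneg i j)
    exact ⟨k, Finset.mem_Ico.mpr ⟨le_refl k, hkl⟩, hlam'pos k hkr j⟩
  have hμlt : ∀ j, μ j < 1 := by
    intro j
    have h1 : μ j ≤ ∑ i ∈ Finset.range r, lam' i j := by
      apply Finset.sum_le_sum_of_subset_of_nonneg
      · intro i hi
        rw [Finset.mem_Ico] at hi
        rw [Finset.mem_range]
        exact lt_of_lt_of_le hi.2 hlr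
      · intro i _ _
        exact hlam'nonneg i j
    rw [hsum' j] at h1
    exact lt_of_le_of_lt h1 (hsum j)
  have hμF : c * μ 0 + μ 1 = S l - S k := by
    have hIco : S l - S k = ∑ i ∈ Finset.Ico k l, F i := by
      simp only [hS]
      rw [Finset.sum_Ico_eq_sub _ (le_of_lt hkl)]
    rw [hIco]
    simp only [hF, hμ, Finset.sum_add_distrib, Finset.mul_sum]
  have h1 : 0 < c * μ 0 + μ 1 := add_pos (mul_pos hc0 (hμpos 0)) (hμpos 1)
  have h2 : c * μ 0 + μ 1 < (c+1)/r := by rw [hμF]; exact hdiff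
  have hμΓ : qmap 2 μ ∈ Γ := by
    have hμeq : μ = ∑ i ∈ Finset.Ico k l, lam' i := by
      funext j
      simp [hμ, Finset.sum_apply]
    rw [hμeq, qmap_sum]
    apply AddSubgroup.sum_mem
    intro i hi
    have hir : i < r := lt_of_lt_of_le (Finset.mem_Ico.mp hi).2 hlr
    have hli : lam' i = lam ⟨i, hir⟩ := by simp [hlam', hir]
    rw [hli]
    exact hmem _
  have hrr : 0 < 1/(r:ℝ) := by positivity
  have i1 : -μ 0 < -μ 0 + 1/(r:ℝ) := by linarith
  have i2 : -μ 0 < μ 1 / c := by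
    rw [lt_div_iff₀ hc0]
    nlinarith
  have i3 : (μ 1 - 1/(r:ℝ))/c < -μ 0 + 1/r := by
    rw [div_lt_iff₀ hc0]
    have h2' : c * μ 0 + μ 1 < c/r + 1/r := by
      have := h2
      rw [add_div] at this
      exact this
    have hexp : (-μ 0 + 1/(r:ℝ)) * c = -(c * μ 0) + c * (1/r) := by ring
    have hcr : c/(r:ℝ) = c * (1/r) := by ring
    rw [hexp]
    rw [hcr] at h2'
    linarith
  have i4 : (μ 1 - 1/(r:ℝ))/c < μ 1 / c :=
    (div_lt_div_iff_of_pos_right hc0).mpr (by linarith)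

  have hLH : max (-μ 0) ((μ 1 - 1/(r:ℝ))/c) < min (-μ 0 + 1/(r:ℝ)) (μ 1/c) :=
    max_lt (lt_min i1 i2) (lt_min i3 i4)
  obtain ⟨s, hs1, hs2⟩ := exists_between hLH
  have hsa : -μ 0 < s := lt_of_le_of_lt (le_max_left _ _) hs1
  have hsb : (μ 1 - 1/(r:ℝ))/c < s := lt_of_le_of_lt (le_max_right _ _) hs1
  have hsc : s < -μ 0 + 1/(r:ℝ) := lt_of_lt_of_le hs2 (min_le_left _ _)
  have hsd : s < μ 1 / c := lt_of_lt_of_le hs2 (min_le_right _ _)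
  have hcs1 : c * s < μ 1 := by
    rw [lt_div_iff₀ hc0] at hsd
    linarith
  have hcs2 : μ 1 - 1/(r:ℝ) < c * s := by
    rw [div_lt_iff₀ hc0] at hsb
    linarith
  set t := s / u 0 with htdef
  refine ⟨qmap 2 μ + qmap 2 (t • u), Γ.add_mem hμΓ (hu t), ?_⟩
  rw [← qmap_add]
  apply mem_piCube
  have e0 : (μ + t • u) 0 = μ 0 + s := by
    show μ 0 + t * u 0 = _
    rw [htdef, div_mul_cancel₀ _ ha']
  have e1 : (μ + t • u) 1 = μ 1 - c * s := by
    show μ 1 + t * u 1 = _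
    rw [htdef, hc]
    field_simp
    ring
  refine Fin.forall_fin_two.mpr ⟨?_, ?_⟩
  · rw [e0]
    exact ⟨by linarith, by linarith⟩
  · rw [e1]
    exact ⟨by linarith, by linarith⟩

end CondAProof

/-- For an infinite closed subgroup `Γ` of the torus `T² = (ℝ/ℤ)²` and any `r ≥ 1`,
Condition A for `r` holds for `Γ` iff `Γ` meets `Π_r`. -/
theorem condA_iff_inter_piCube_dim_two
    (Γ : AddSubgroup (Torus 2)) (hclosed : IsClosed (Γ : Set (Torus 2)))
    (hinf : (Γ : Set (Torus 2)).Infinite) :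
    ∀ r : ℕ, 1 ≤ r →
      (CondA 2 r (Γ : Set (Torus 2)) ↔ ((Γ : Set (Torus 2)) ∩ PiCube 2 r).Nonempty) := by
  intro r hr
  constructor
  · intro hA
    obtain ⟨u, hu0, hu⟩ := CondAProof.exists_line Γ hclosed hinf
    have hu' : ∀ t : ℝ, qmap 2 (t • (-u)) ∈ Γ := by
      intro t
      have h := hu (-t)
      rwa [neg_smul, ← smul_neg] at h
    have hnu0 : (0:ℝ) < (-u) 0 ↔ u 0 < 0 := by simp
    rcases lt_trichotomy (u 0) 0 with ha | ha | ha
    · rcases lt_trichotomy (u 1) 0 with hb | hb | hb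
      · exact CondAProof.case_pos_pos hr (u := -u) (by simpa using ha) (by simpa using hb) hu'
      · exact CondAProof.case_axis0 hr (ne_of_lt ha) hb hu hA
      · exact CondAProof.case_mixed hr (u := -u) (by simpa using ha)
          (by simpa using hb) hu' hA
    · rcases eq_or_ne (u 1) 0 with hb | hb
      · exact absurd (by funext j; fin_cases j <;> [exact ha; exact hb]) hu0
      · exact CondAProof.case_axis1 hr ha hb hu hA
    · rcases lt_trichotomy (u 1) 0 with hb | hb | hb
      · exact CondAProof.case_mixed hr ha hb hu hA
      · exact CondAProof.case_axis0 hr (ne_of_gt ha) hb hu hA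
      · exact CondAProof.case_pos_pos hr ha hb hu
  · rintro ⟨x, hxΓ, hxP⟩
    obtain ⟨v, hv, rfl⟩ := hxP
    have hrR : (1:ℝ) ≤ r := by exact_mod_cast hr
    have hr0 : (0:ℝ) < r := by linarith
    refine ⟨fun _ => v, fun i j => ⟨(hv j).1, ?_⟩, fun i => hxΓ, fun j => ?_⟩
    · have h1r : 1/(r:ℝ) ≤ 1 := by
        rw [div_le_one hr0]
        exact hrR
      exact lt_of_lt_of_le (hv j).2 h1r
    · have hseq : ∑ _i : Fin r, v j = (r:ℝ) * v j := by
        rw [Finset.sum_const, Finset.card_univ, Fintype.card_fin, nsmul_eq_mul]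
      rw [hseq]
      have h2 := (hv j).2
      have h3 : (r:ℝ) * v j < r * (1/r) := by
        apply mul_lt_mul_of_pos_left h2 hr0
      have h4 : (r:ℝ) * (1/r) = 1 := by field_simp
      linarith
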